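/- Let μ = Σ_{k≥2} 4^{−k}·δ_{2π·2^{−k}}, a finite Borel measure on [0,π] consisting of atoms of mass 4^{−k} at the points 2π·2^{−k} for k ≥ 2. Then sup_k V(2^k) < ∞ while sup_n V(n) = ∞. (Hence the Leonov dichotomy — either V(n) → ∞ or sup_n V(n) < ∞ — fails without the condition that the covariances tend to zero.) -/

import Mathlib

/-!
The atoms sit at `2π/2^j` (`j ≥ 2`) with weights `4^{-j}`, and `I_n ≤ n²`. For `n = 2^k` the
kernel vanishes at every atom with `2^j ∣ 2^k`, and each remaining atom contributes at most
`4^{k-j}`, so `V(2^k) ≤ 1/3`. For `n = 1 + 4 + ⋯ + 4^{m-1}` and `t < m`, the angle `nπ/4^{t+1}`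
is congruent mod `π` to `rπ/4^{t+1}` with `r = (4^{t+1}-1)/3`, which lies in `[π/4, π/3]`; so
`sin²(nπ/4^{t+1}) ≥ 1/2`, while `sin²(π/4^{t+1}) ≤ (π/4^{t+1})²`. Each of the atoms `2π/4^{t+1}`
then contributes at least `1/(2π²)`, and `V(n) ≥ m/(2π²)`.
-/

open MeasureTheory Filter Set Topology

/-- Fejér-type kernel: `I_n(y) = sin²(ny/2)/sin²(y/2)` for `y ≠ 0`, `I_n(0) = n²`. -/
noncomputable def fejerKernel (n : ℕ) (y : ℝ) : ℝ :=
  if y = 0 then (n : ℝ) ^ 2 else Real.sin (n * y / 2) ^ 2 / Real.sin (y / 2) ^ 2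

/-- Variance functional `V(n) = ∫_{[0,π]} I_n(y) dμ(y)`. -/
noncomputable def varV (μ : Measure ℝ) (n : ℕ) : ℝ :=
  ∫ y in Icc 0 Real.pi, fejerKernel n y ∂μ

/-- `G(x) = μ([0,x])` for a measure `μ` on `[0,π]`. -/
noncomputable def specG (μ : Measure ℝ) (x : ℝ) : ℝ :=
  (μ (Icc 0 x)).toReal

/-- A function `L : (0,∞) → (0,∞)` is slowly varying at infinity if
`L(λx)/L(x) → 1` as `x → ∞` for every `λ > 0`. -/
def SlowlyVarying (L : ℝ → ℝ) : Prop :=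
  ∀ lam : ℝ, 0 < lam → Tendsto (fun x => L (lam * x) / L x) atTop (𝓝 1)

open Real ENNReal

lemma abs_sin_nat_mul_le (n : ℕ) (x : ℝ) : |sin (n * x)| ≤ n * |sin x| := by
  induction n with
  | zero => simp
  | succ n ih =>
    calc |sin ((n + 1 : ℕ) * x)| = |sin (n * x) * cos x + cos (n * x) * sin x| := by
          push_cast; rw [add_mul, one_mul, sin_add]
      _ ≤ |sin (n * x)| * |cos x| + |cos (n * x)| * |sin x| := by
          rw [← abs_mul, ← abs_mul]; exact abs_add_le _ _
      _ ≤ n * |sin x| * 1 + 1 * |sin x| := by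
          gcongr
          exacts [abs_cos_le_one _, abs_cos_le_one _]
      _ = (n + 1 : ℕ) * |sin x| := by push_cast; ring

lemma sin_nat_mul_sq_le (n : ℕ) (x : ℝ) : sin (n * x) ^ 2 ≤ n ^ 2 * sin x ^ 2 := by
  rw [← sq_abs, ← sq_abs (sin x), ← mul_pow]
  exact pow_le_pow_left₀ (abs_nonneg _) (abs_sin_nat_mul_le n x) 2

lemma fejerKernel_of_ne_zero (n : ℕ) {y : ℝ} (hy : y ≠ 0) :
    fejerKernel n y = sin (n * (y / 2)) ^ 2 / sin (y / 2) ^ 2 := by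
  rw [fejerKernel, if_neg hy, mul_div_assoc]

lemma fejerKernel_nonneg (n : ℕ) (y : ℝ) : 0 ≤ fejerKernel n y := by
  unfold fejerKernel; split <;> positivity

lemma fejerKernel_le_sq (n : ℕ) (y : ℝ) : fejerKernel n y ≤ n ^ 2 := by
  rcases eq_or_ne y 0 with rfl | hy
  · simp [fejerKernel]
  rw [fejerKernel_of_ne_zero n hy]
  exact div_le_of_le_mul₀ (sq_nonneg _) (sq_nonneg _) (sin_nat_mul_sq_le n _)

lemma sin_sq_div_sq_le_fejerKernel (n : ℕ) {y : ℝ} (hy : y ≠ 0) :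
    sin (n * (y / 2)) ^ 2 / (y / 2) ^ 2 ≤ fejerKernel n y := by
  rw [fejerKernel_of_ne_zero n hy]
  rcases eq_or_ne (sin (y / 2)) 0 with h | h
  · have : sin (n * (y / 2)) ^ 2 = 0 :=
      le_antisymm (by simpa [h] using sin_nat_mul_sq_le n (y / 2)) (sq_nonneg _)
    simp [this]
  · exact div_le_div_of_nonneg_left (sq_nonneg _) (by positivity) sin_sq_le_sq

lemma fejerKernel_two_pi_div_eq_zero {m n : ℕ} (hm : m ≠ 0) (hmn : m ∣ n) :
    fejerKernel n (2 * π / m) = 0 := by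
  obtain ⟨q, rfl⟩ := hmn
  have hy : 2 * π / m ≠ 0 := by positivity
  rw [fejerKernel_of_ne_zero _ hy, show ((m * q : ℕ) : ℝ) * (2 * π / m / 2) = q * π by
    push_cast; field_simp, sin_nat_mul_pi]
  simp

lemma measurable_fejerKernel (n : ℕ) : Measurable (fejerKernel n) :=
  Measurable.ite (measurableSet_singleton 0) measurable_const (by fun_prop)

lemma integral_sum_smul_dirac {α ι : Type*} [MeasurableSpace α] {f : α → ℝ} (hf : Measurable f)
    (hf₀ : 0 ≤ f) (c : ι → ℝ≥0∞) (hc : ∀ i, c i ≠ ∞) (p : ι → α) :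
    ∫ x, f x ∂(Measure.sum fun i => c i • Measure.dirac (p i)) = ∑' i, (c i).toReal * f (p i) := by
  rw [integral_eq_lintegral_of_nonneg_ae (ae_of_all _ hf₀) hf.aestronglyMeasurable,
    lintegral_sum_measure]
  simp only [lintegral_smul_measure, smul_eq_mul,
    lintegral_dirac' _ (f := fun x => ENNReal.ofReal (f x)) hf.ennreal_ofReal]
  rw [ENNReal.tsum_toReal_eq fun i => mul_ne_top (hc i) ofReal_ne_top]
  simp [toReal_ofReal (hf₀ _)]

lemma restrict_sum_smul_dirac_of_mem {α ι : Type*} [MeasurableSpace α] {s : Set α}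
    (hs : MeasurableSet s) (c : ι → ℝ≥0∞) {p : ι → α} (hp : ∀ i, p i ∈ s) :
    (Measure.sum fun i => c i • Measure.dirac (p i)).restrict s =
      Measure.sum fun i => c i • Measure.dirac (p i) := by
  classical
  rw [Measure.restrict_sum _ hs]
  simp_rw [Measure.restrict_smul, restrict_dirac' hs, if_pos (hp _)]

lemma varV_sum_smul_dirac {ι : Type*} (c : ι → ℝ≥0∞) (hc : ∀ i, c i ≠ ∞) {p : ι → ℝ}
    (hp : ∀ i, p i ∈ Icc 0 π) (n : ℕ) :
    varV (Measure.sum fun i => c i • Measure.dirac (p i)) n =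
      ∑' i, (c i).toReal * fejerKernel n (p i) := by
  rw [varV, restrict_sum_smul_dirac_of_mem measurableSet_Icc c hp,
    integral_sum_smul_dirac (measurable_fejerKernel n) (fejerKernel_nonneg n) c hc]

lemma geom_sum_range_add {R : Type*} [Semiring R] (x : R) (a b : ℕ) :
    ∑ i ∈ Finset.range (a + b), x ^ i =
      ∑ i ∈ Finset.range a, x ^ i + x ^ a * ∑ i ∈ Finset.range b, x ^ i := by
  simp [Finset.sum_range_add, Finset.mul_sum, pow_add]

lemma one_half_le_sin_sq_geom_sum_four {a m : ℕ} (ha : 0 < a) (ham : a ≤ m) :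
    1 / 2 ≤ sin ((∑ i ∈ Finset.range m, 4 ^ i : ℕ) * (π / 4 ^ a)) ^ 2 := by
  obtain ⟨b, rfl⟩ := Nat.exists_eq_add_of_le ham
  set r := ∑ i ∈ Finset.range a, (4 : ℝ) ^ i
  have hr : (4 : ℝ) ^ a = 3 * r + 1 := by
    linarith [geom_sum_mul (4 : ℝ) a]
  have hr₁ : 1 ≤ r := by
    linarith [le_self_pow₀ (by norm_num : (1 : ℝ) ≤ 4) ha.ne']
  have hsplit : ((∑ i ∈ Finset.range (a + b), 4 ^ i : ℕ) : ℝ) * (π / 4 ^ a) =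
      r * (π / 4 ^ a) + (∑ i ∈ Finset.range b, 4 ^ i : ℕ) * π := by
    push_cast
    rw [geom_sum_range_add]
    field_simp
    rfl
  rw [sin_sq_eq_half_sub, hsplit, mul_add, mul_left_comm 2 _ π, cos_add_nat_mul_two_pi, hr]
  have hπ := pi_pos
  suffices cos (2 * (r * (π / (3 * r + 1)))) ≤ 0 by linarith
  have hx : 2 * (r * (π / (3 * r + 1))) = 2 * r * π / (3 * r + 1) := by ring
  apply cos_nonpos_of_pi_div_two_le_of_le
  · rw [hx, le_div_iff₀ (by positivity)]
    nlinarith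
  · rw [hx, div_le_iff₀ (by positivity)]
    nlinarith

noncomputable def leonovMeasure : Measure ℝ :=
  Measure.sum fun k : ℕ => ((4 : ℝ≥0∞) ^ (k + 2))⁻¹ • Measure.dirac (2 * π / 2 ^ (k + 2))

lemma two_pi_div_two_pow_add_two_mem_Icc (k : ℕ) : 2 * π / 2 ^ (k + 2) ∈ Icc 0 π := by
  refine ⟨by positivity, ?_⟩
  rw [show 2 * π / 2 ^ (k + 2) = π / 2 ^ (k + 1) by rw [pow_succ _ (k + 1)]; ring]
  exact div_le_self pi_pos.le (one_le_pow₀ one_le_two)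

lemma varV_leonovMeasure (n : ℕ) :
    varV leonovMeasure n =
      ∑' k : ℕ, ((4 : ℝ) ^ (k + 2))⁻¹ * fejerKernel n (2 * π / 2 ^ (k + 2)) := by
  rw [leonovMeasure, varV_sum_smul_dirac _ (fun k => by simp) two_pi_div_two_pow_add_two_mem_Icc]
  simp

lemma summable_inv_four_pow_mul_fejerKernel (n : ℕ) (y : ℕ → ℝ) :
    Summable fun k : ℕ => ((4 : ℝ) ^ (k + 2))⁻¹ * fejerKernel n (y k) := by
  have hw : Summable fun k : ℕ => ((4 : ℝ) ^ (k + 2))⁻¹ := by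
    simp_rw [← inv_pow]
    exact (summable_nat_add_iff 2).2 (summable_geometric_of_lt_one (by norm_num) (by norm_num))
  refine (hw.mul_right ((n : ℝ) ^ 2)).of_nonneg_of_le
    (fun k => mul_nonneg (by positivity) (fejerKernel_nonneg _ _)) (fun k => ?_)
  exact mul_le_mul_of_nonneg_left (fejerKernel_le_sq _ _) (by positivity)

lemma varV_leonovMeasure_two_pow_le (k : ℕ) : varV leonovMeasure (2 ^ k) ≤ 1 / 3 := by
  set T := fun j : ℕ => ((4 : ℝ) ^ (j + 2))⁻¹ * fejerKernel (2 ^ k) (2 * π / 2 ^ (j + 2))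
  have hT := summable_inv_four_pow_mul_fejerKernel (2 ^ k) fun j => 2 * π / 2 ^ (j + 2)
  have hvanish : ∀ j < k - 1, T j = 0 := fun j hj => by
    have := fejerKernel_two_pi_div_eq_zero (m := 2 ^ (j + 2)) (n := 2 ^ k) (by positivity)
      (pow_dvd_pow 2 (by omega))
    simp_all [T]
  have htail : ∀ i, T (i + (k - 1)) ≤ 4⁻¹ * 4⁻¹ ^ i := fun i => calc
    T (i + (k - 1)) ≤ ((4 : ℝ) ^ (i + (k - 1) + 2))⁻¹ * 4 ^ k := by
      refine mul_le_mul_of_nonneg_left ((fejerKernel_le_sq _ _).trans_eq ?_) (by positivity)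
      push_cast
      rw [← pow_mul, mul_comm, pow_mul]
      norm_num
    _ ≤ ((4 : ℝ) ^ (i + k + 1))⁻¹ * 4 ^ k := by
      have : i + k + 1 ≤ i + (k - 1) + 2 := by omega
      gcongr
      norm_num
    _ = 4⁻¹ * 4⁻¹ ^ i := by
      rw [inv_pow, pow_add, pow_add]
      field_simp
  calc varV leonovMeasure (2 ^ k) = ∑' j, T j := varV_leonovMeasure _
    _ = ∑ j ∈ Finset.range (k - 1), T j + ∑' i, T (i + (k - 1)) :=
      (hT.sum_add_tsum_nat_add _).symm
    _ = ∑' i, T (i + (k - 1)) := by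
      rw [Finset.sum_eq_zero fun j hj => hvanish j (Finset.mem_range.1 hj), zero_add]
    _ ≤ ∑' i : ℕ, (4 : ℝ)⁻¹ * 4⁻¹ ^ i :=
      ((summable_nat_add_iff _).2 hT).tsum_le_tsum htail
        ((summable_geometric_of_lt_one (by norm_num) (by norm_num)).mul_left _)
    _ = 1 / 3 := by
      rw [tsum_mul_left, tsum_geometric_of_lt_one (by norm_num) (by norm_num)]
      norm_num

lemma one_div_two_mul_pi_sq_le_inv_four_pow_mul_fejerKernel {m t : ℕ} (ht : t < m) :
    1 / (2 * π ^ 2) ≤ ((4 : ℝ) ^ (2 * t + 2))⁻¹ *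
      fejerKernel (∑ i ∈ Finset.range m, 4 ^ i) (2 * π / 2 ^ (2 * t + 2)) := by
  have hy : 2 * π / 2 ^ (2 * t + 2) / 2 = π / 4 ^ (t + 1) := by
    rw [show (2 : ℝ) ^ (2 * t + 2) = 4 ^ (t + 1) by
      rw [show 2 * t + 2 = 2 * (t + 1) by ring, pow_mul]; norm_num]
    ring
  have h16 : (4 : ℝ) ^ (2 * t + 2) = (4 ^ (t + 1)) ^ 2 := by ring
  calc 1 / (2 * π ^ 2) = ((4 : ℝ) ^ (2 * t + 2))⁻¹ * ((1 / 2) / (π / 4 ^ (t + 1)) ^ 2) := by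
        rw [h16]
        field_simp
    _ ≤ ((4 : ℝ) ^ (2 * t + 2))⁻¹ * (sin ((∑ i ∈ Finset.range m, 4 ^ i : ℕ) *
          (π / 4 ^ (t + 1))) ^ 2 / (π / 4 ^ (t + 1)) ^ 2) := by
        gcongr
        exact one_half_le_sin_sq_geom_sum_four t.succ_pos ht
    _ ≤ _ := by
        rw [← hy]
        gcongr
        exact sin_sq_div_sq_le_fejerKernel _ (by positivity)

lemma le_varV_leonovMeasure_geom_sum_four (m : ℕ) :
    m / (2 * π ^ 2) ≤ varV leonovMeasure (∑ i ∈ Finset.range m, 4 ^ i) := by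
  set n := ∑ i ∈ Finset.range m, 4 ^ i
  set T := fun j : ℕ => ((4 : ℝ) ^ (j + 2))⁻¹ * fejerKernel n (2 * π / 2 ^ (j + 2))
  let double : ℕ ↪ ℕ := ⟨(2 * ·), mul_right_injective₀ two_ne_zero⟩
  calc (m : ℝ) / (2 * π ^ 2) = ∑ _t ∈ Finset.range m, 1 / (2 * π ^ 2) := by
        rw [Finset.sum_const, Finset.card_range, nsmul_eq_mul, mul_one_div]
    _ ≤ ∑ t ∈ Finset.range m, T (2 * t) := Finset.sum_le_sum fun t ht =>
        one_div_two_mul_pi_sq_le_inv_four_pow_mul_fejerKernel (Finset.mem_range.1 ht)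
    _ = ∑ j ∈ (Finset.range m).map double, T j := by rw [Finset.sum_map]; rfl
    _ ≤ ∑' j, T j := (summable_inv_four_pow_mul_fejerKernel n _).sum_le_tsum _
        fun j _ => mul_nonneg (by positivity) (fejerKernel_nonneg _ _)
    _ = varV leonovMeasure n := (varV_leonovMeasure n).symm

/-- For `μ = Σ_{k≥2} 4^{-k} δ_{2π 2^{-k}}`, one has `sup_k V(2^k) < ∞`
while `sup_n V(n) = ∞`: the Leonov dichotomy fails. -/
theorem leonov_dichotomy_fails (μ : Measure ℝ)
    (hμ : μ = Measure.sum (fun k : ℕ =>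
      ((4 : ENNReal) ^ (k + 2))⁻¹ • Measure.dirac (2 * Real.pi / 2 ^ (k + 2)))) :
    (∃ M : ℝ, ∀ k : ℕ, varV μ (2 ^ k) ≤ M) ∧
    ¬ ∃ M : ℝ, ∀ n : ℕ, varV μ n ≤ M := by
  obtain rfl : μ = leonovMeasure := hμ
  refine ⟨⟨1 / 3, varV_leonovMeasure_two_pow_le⟩, fun ⟨M, hM⟩ => ?_⟩
  obtain ⟨m, hm⟩ := exists_nat_gt (2 * π ^ 2 * M)
  have hV := (le_varV_leonovMeasure_geom_sum_four m).trans (hM _)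
  rw [div_le_iff₀ (by positivity)] at hV
  linarith
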